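/- Let A, B, C be three non-collinear points of the Euclidean plane and let A' be a point of the segment [B, C] such that ∠BAA' = ∠CAA' (i.e. A' is the foot of the internal bisector of the angle at A). Then |AB| + |AC| ≥ (√(|AC|/|AB|) + √(|AB|/|AC|))·|AA'|. -/

import Mathlib

/-!
Put `u = B - A`, `v = C - A`, `b = ‖u‖`, `c = ‖v‖` and `A' - A = s₁ • u + s₂ • v` with `s₁ + s₂ = 1`.
Equal angles with `u` and `v` give `(b c - ⟪u, v⟫) (s₁ b - s₂ c) = 0`, and non-collinearity kills the
first factor, so `(b + c) • (A' - A) = c • u + b • v`. Since `⟪u, v⟫ ≤ b c ≤ (b² + c²) / 2`, this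
vector has squared norm at most `b c (b + c)²`, hence `|AA'|² ≤ b c`. The claim is this bound
multiplied by `(b + c) / √(b c) = √(c / b) + √(b / c)`.
-/

open EuclideanGeometry RealInnerProductSpace

namespace InnerProductGeometry

variable {V : Type*} [NormedAddCommGroup V] [InnerProductSpace ℝ V]

theorem inner_mul_norm_eq_of_angle_eq {u v w : V} (h : angle u w = angle v w) :
    ⟪u, w⟫ * ‖v‖ = ⟪v, w⟫ * ‖u‖ := by
  rw [← cos_angle_mul_norm_mul_norm u w, ← cos_angle_mul_norm_mul_norm v w, h]
  ring

theorem mul_norm_eq_of_angle_smul_add_smul_eq {u v : V} {s₁ s₂ : ℝ}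
    (huv : ⟪u, v⟫ ≠ ‖u‖ * ‖v‖)
    (h : angle u (s₁ • u + s₂ • v) = angle v (s₁ • u + s₂ • v)) :
    s₁ * ‖u‖ = s₂ * ‖v‖ := by
  have key := inner_mul_norm_eq_of_angle_eq h
  simp only [inner_add_right, real_inner_smul_right, real_inner_self_eq_norm_sq,
    real_inner_comm u v] at key
  have hfactor : (‖u‖ * ‖v‖ - ⟪u, v⟫) * (s₁ * ‖u‖ - s₂ * ‖v‖) = 0 := by
    linear_combination key
  rcases mul_eq_zero.1 hfactor with h' | h'
  · exact absurd (sub_eq_zero.1 h').symm huv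
  · exact sub_eq_zero.1 h'

theorem norm_smul_add_smul_sq_le (u v : V) :
    ‖‖v‖ • u + ‖u‖ • v‖ ^ 2 ≤ ‖u‖ * ‖v‖ * (‖u‖ + ‖v‖) ^ 2 := by
  rw [norm_add_sq_real, norm_smul, norm_smul, real_inner_smul_left, real_inner_smul_right,
    Real.norm_of_nonneg (norm_nonneg _), Real.norm_of_nonneg (norm_nonneg _)]
  nlinarith [real_inner_le_norm u v, mul_nonneg (norm_nonneg u) (norm_nonneg v),
    sq_nonneg (‖u‖ - ‖v‖)]

theorem norm_sq_le_of_angle_smul_add_smul_eq {u v : V} {s₁ s₂ : ℝ}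
    (huv : ⟪u, v⟫ ≠ ‖u‖ * ‖v‖) (hs : s₁ + s₂ = 1)
    (h : angle u (s₁ • u + s₂ • v) = angle v (s₁ • u + s₂ • v)) :
    ‖s₁ • u + s₂ • v‖ ^ 2 ≤ ‖u‖ * ‖v‖ := by
  have hbal := mul_norm_eq_of_angle_smul_add_smul_eq huv h
  have hpos : 0 < ‖u‖ + ‖v‖ := by
    by_contra! hle
    have hu : ‖u‖ = 0 := by linarith [norm_nonneg u, norm_nonneg v]
    have hv : ‖v‖ = 0 := by linarith [norm_nonneg u, norm_nonneg v]
    simp_all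
  have hsmul : (‖u‖ + ‖v‖) • (s₁ • u + s₂ • v) = ‖v‖ • u + ‖u‖ • v := by
    rw [smul_add, smul_smul, smul_smul]
    congr 2
    · linear_combination ‖v‖ * hs + hbal
    · linear_combination ‖u‖ * hs - hbal
  have hbound := norm_smul_add_smul_sq_le u v
  rw [← hsmul, norm_smul, Real.norm_of_nonneg hpos.le, mul_pow, mul_comm] at hbound
  exact le_of_mul_le_mul_right hbound (by positivity)

end InnerProductGeometry

theorem sqrt_div_add_sqrt_div_mul_le {b c t : ℝ} (hb : 0 < b) (hc : 0 < c) (ht : 0 ≤ t)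
    (h : t ^ 2 ≤ b * c) : (√(c / b) + √(b / c)) * t ≤ b + c := by
  have hsb := Real.sq_sqrt hb.le
  have hsc := Real.sq_sqrt hc.le
  have hsb0 := Real.sqrt_pos.2 hb
  have hsc0 := Real.sqrt_pos.2 hc
  have hts : t ≤ √b * √c := by
    rw [← Real.sqrt_mul hb.le, ← Real.sqrt_sq ht]
    exact Real.sqrt_le_sqrt h
  rw [Real.sqrt_div' c hb.le, Real.sqrt_div' b hc.le, div_add_div _ _ hsb0.ne' hsc0.ne',
    div_mul_eq_mul_div, div_le_iff₀ (by positivity)]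
  nlinarith [mul_pos hsb0 hsc0]

theorem dist_sq_le_mul_of_angle_eq_of_mem_segment {V : Type*} [NormedAddCommGroup V]
    [InnerProductSpace ℝ V] {A B C A' : V} (h : ¬Collinear ℝ ({A, B, C} : Set V))
    (hA' : A' ∈ segment ℝ B C) (hbis : ∠ B A A' = ∠ C A A') :
    dist A A' ^ 2 ≤ dist A B * dist A C := by
  obtain ⟨s₁, s₂, -, -, hs, rfl⟩ := hA'
  have hdecomp : s₁ • B + s₂ • C - A = s₁ • (B - A) + s₂ • (C - A) := by
    linear_combination (norm := module) hs • A
  have hB : B - A ≠ 0 := sub_ne_zero.2 (ne₁₂_of_not_collinear h).symm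
  have hC : C - A ≠ 0 := sub_ne_zero.2 (ne₁₃_of_not_collinear h).symm
  have hnot : ⟪B - A, C - A⟫ ≠ ‖B - A‖ * ‖C - A‖ := fun heq =>
    angle_ne_zero_of_not_collinear (p₂ := A) (by rwa [Set.insert_comm])
      ((InnerProductGeometry.inner_eq_mul_norm_iff_angle_eq_zero hB hC).1 heq)
  rw [EuclideanGeometry.angle, EuclideanGeometry.angle, vsub_eq_sub, vsub_eq_sub, vsub_eq_sub,
    hdecomp] at hbis
  rw [dist_comm A, dist_comm A, dist_comm A, dist_eq_norm, dist_eq_norm, dist_eq_norm, hdecomp]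
  exact InnerProductGeometry.norm_sq_le_of_angle_smul_add_smul_eq hnot hs hbis

theorem statement10 (A B C A' : EuclideanSpace ℝ (Fin 2))
    (h : ¬ Collinear ℝ ({A, B, C} : Set (EuclideanSpace ℝ (Fin 2))))
    (hA' : A' ∈ segment ℝ B C)
    (hbis : ∠ B A A' = ∠ C A A') :
    dist A B + dist A C ≥
      (Real.sqrt (dist A C / dist A B) + Real.sqrt (dist A B / dist A C)) * dist A A' :=
  sqrt_div_add_sqrt_div_mul_le (dist_pos.2 (ne₁₂_of_not_collinear h))
    (dist_pos.2 (ne₁₃_of_not_collinear h)) dist_nonneg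
    (dist_sq_le_mul_of_angle_eq_of_mem_segment h hA' hbis)
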